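/- arXiv:2003.01154 — 2 statements merged into one kernel-verified Lean document; each statement's English description precedes it below -/
import Mathlib

section
/- Let G=(V,E) be a finite simple graph on n vertices, let q ≥ 2 be an integer, let P_1,…,P_ℓ be a partition of V and α > 0 such that for every i and every S ⊆ P_i with |S| ≤ |P_i|/2 one has |∂_{G[P_i]}(S)| ≥ α|S|, and suppose |P_i| ≥ ηn for every i, where η > 0. Then for every β ≥ 0: Z_G(β) − Z*_G(β) ≤ q^n · e^{β(|E| − αηn/2)}. -/
open Classical

noncomputable section

namespace Paper

variable {V : Type*}

/-- The degree of a vertex. -/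
def deg (G : SimpleGraph V) (v : V) : ℕ := (G.neighborSet v).ncard

/-- The volume of a vertex set: the sum of the degrees of its vertices. -/
def vol (G : SimpleGraph V) (S : Set V) : ℕ := ∑ᶠ v ∈ S, deg G v

/-- The edge boundary ∂(S): edges of `G` with exactly one endpoint in `S`. -/
def bdry (G : SimpleGraph V) (S : Set V) : Set (Sym2 V) :=
  {e | e ∈ G.edgeSet ∧ (∃ u ∈ e, u ∈ S) ∧ (∃ v ∈ e, v ∉ S)}

/-- The closure ∇(S): edges of `G` with at least one endpoint in `S`. -/
def cl (G : SimpleGraph V) (S : Set V) : Set (Sym2 V) :=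
  {e | e ∈ G.edgeSet ∧ ∃ u ∈ e, u ∈ S}

/-- The conductance φ_G(S) = |∂(S)| / vol_G(S). -/
def cond (G : SimpleGraph V) (S : Set V) : ℝ :=
  ((bdry G S).ncard : ℝ) / (vol G S : ℝ)

/-- The conductance φ(G) of the graph: the minimum of φ_G(S) over nonempty S
with vol_G(S) ≤ vol_G(V)/2. -/
def graphCond [Fintype V] (G : SimpleGraph V) : ℝ :=
  sInf {x : ℝ | ∃ S : Set V, S.Nonempty ∧ 2 * vol G S ≤ vol G Set.univ ∧ x = cond G S}

/-- The induced subgraph G[P], realised as a graph on the same vertex set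
(vertices outside `P` are isolated). -/
def restrict (G : SimpleGraph V) (P : Set V) : SimpleGraph V where
  Adj u v := G.Adj u v ∧ u ∈ P ∧ v ∈ P
  symm := ⟨fun _ _ h => ⟨h.1.symm, h.2.2, h.2.1⟩⟩
  loopless := ⟨fun _ h => G.irrefl h.1⟩

/-- e(S,T): the number of edges of `G` with one endpoint in `S` and the other in `T \ S`. -/
def eCount (G : SimpleGraph V) (S T : Set V) : ℕ :=
  ({e | e ∈ G.edgeSet ∧ ∃ u v, e = s(u, v) ∧ u ∈ S ∧ v ∈ T \ S}).ncard

/-- φ(S,B) = e(S,B) / ((vol(B∖S)/vol(B)) · e(S, V∖B)). -/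
def condPair (G : SimpleGraph V) (S B : Set V) : ℝ :=
  (eCount G S B : ℝ) /
    (((vol G (B \ S) : ℝ) / (vol G B : ℝ)) * (eCount G S (Set.univ \ B) : ℝ))

/-- An edge is monochromatic under a colouring if all its endpoints get the same colour. -/
def Mono {q : ℕ} (χ : V → Fin q) (e : Sym2 V) : Prop :=
  ∀ u ∈ e, ∀ v ∈ e, χ u = χ v

/-- The number of edges in `F` that are monochromatic under `χ`. -/
def monoCount {q : ℕ} (χ : V → Fin q) (F : Set (Sym2 V)) : ℕ :=
  {e ∈ F | Mono χ e}.ncard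

/-- m_G(χ): the number of monochromatic edges of `G` under `χ`. -/
def mG {q : ℕ} (G : SimpleGraph V) (χ : V → Fin q) : ℕ := monoCount χ G.edgeSet

/-- The q-colour Potts model partition function. -/
def Z [Fintype V] [DecidableEq V] (G : SimpleGraph V) (q : ℕ) (β : ℝ) : ℝ :=
  ∑ ω : V → Fin q, Real.exp (β * (mG G ω : ℝ))

/-- P_1, …, P_ℓ form a partition of the vertex set. -/
def IsPartition {ℓ : ℕ} (P : Fin ℓ → Set V) : Prop :=
  (∀ i j : Fin ℓ, i ≠ j → Disjoint (P i) (P j)) ∧ (⋃ i, P i) = Set.univ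

/-- A set is small (w.r.t. the partition P) if |S ∩ P i| ≤ |P i|/2 for all i. -/
def Small {ℓ : ℕ} (P : Fin ℓ → Set V) (S : Set V) : Prop :=
  ∀ i, ((S ∩ P i).ncard : ℝ) ≤ ((P i).ncard : ℝ) / 2

/-- A set U is sparse if the vertex set of every connected component of G[U] is small. -/
def Sparse {ℓ : ℕ} (G : SimpleGraph V) (P : Fin ℓ → Set V) (U : Set V) : Prop :=
  ∀ u ∈ U, Small P {v | (restrict G U).Reachable u v}

/-- Every `S ⊆ P i` with `|S| ≤ |P i|/2` satisfies `|∂_{G[P i]}(S)| ≥ α |S|`. -/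
def PartExpansion {ℓ : ℕ} (G : SimpleGraph V) (P : Fin ℓ → Set V) (α : ℝ) : Prop :=
  ∀ i, ∀ S ⊆ P i, (S.ncard : ℝ) ≤ ((P i).ncard : ℝ) / 2 →
    α * (S.ncard : ℝ) ≤ ((bdry (restrict G (P i)) S).ncard : ℝ)

/-- A ground state: a colouring constant on each part of the partition. -/
def GroundState {q ℓ : ℕ} (P : Fin ℓ → Set V) (ψ : V → Fin q) : Prop :=
  ∀ i : Fin ℓ, ∀ u ∈ P i, ∀ v ∈ P i, ψ u = ψ v

/-- A state ω is close to a ground state ψ if on each part, more than half of the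
vertices agree with ψ. -/
def CloseTo {q ℓ : ℕ} (P : Fin ℓ → Set V) (ω ψ : V → Fin q) : Prop :=
  ∀ i : Fin ℓ, ((P i).ncard : ℝ) / 2 < ((P i ∩ {v | ω v = ψ v}).ncard : ℝ)

/-- Z*: the contribution to Z from states close to some ground state. -/
def Zstar [Fintype V] [DecidableEq V] {ℓ : ℕ} (G : SimpleGraph V) (P : Fin ℓ → Set V)
    (q : ℕ) (β : ℝ) : ℝ :=
  ∑ ω : V → Fin q,
    if ∃ ψ : V → Fin q, GroundState P ψ ∧ CloseTo P ω ψ then Real.exp (β * (mG G ω : ℝ)) else 0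

/-- The colouring of V that colours γ by `lam` and everything else by `ψ`. -/
def combine {q : ℕ} (γ : Set V) (ψ : V → Fin q) (lam : γ → Fin q) : V → Fin q :=
  fun v => if h : v ∈ γ then lam ⟨v, h⟩ else ψ v

/-- m_G(ψ, γ, λ): the number of edges of ∇(γ) that are monochromatic when γ is
coloured by λ and all other vertices by ψ. -/
def mRes {q : ℕ} (G : SimpleGraph V) (γ : Set V) (ψ : V → Fin q) (lam : γ → Fin q) : ℕ :=
  monoCount (combine γ ψ lam) (cl G γ)

/-- A polymer: a nonempty small set inducing a connected subgraph. -/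
def Polymer {ℓ : ℕ} (G : SimpleGraph V) (P : Fin ℓ → Set V) (γ : Set V) : Prop :=
  γ.Nonempty ∧ (G.induce γ).Connected ∧ Small P γ

/-- Two polymers are compatible if they are disjoint with disjoint edge boundaries. -/
def Compatible (G : SimpleGraph V) (γ γ' : Set V) : Prop :=
  Disjoint γ γ' ∧ Disjoint (bdry G γ) (bdry G γ')

/-- The family of vertex sets of connected components of G[U]. -/
def components (G : SimpleGraph V) (U : Set V) : Set (Set V) :=
  {C | ∃ u ∈ U, C = {v | (restrict G U).Reachable u v}}


/-!
A state that is close to no ground state has a part `P i` in which no colour class is a strict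
majority. Every colour class of `P i` is then small enough for the expansion hypothesis, and an
edge of `G[P i]` lies on the boundary of at most two colour classes, so summing the expansion
bounds over the colours gives at least `α |P i| / 2 ≥ α η n / 2` bichromatic edges. Each of the
at most `qⁿ` such states therefore has weight at most `e^{β(|E| − αηn/2)}`.
-/

lemma sum_card_le_mul_card_of_subset {ι β : Type*} [Fintype ι] [DecidableEq β] {t : Finset β}
    {B : ι → Finset β} (hB : ∀ i, B i ⊆ t) {n : ℕ}
    (h : ∀ b ∈ t, (Finset.univ.filter fun i => b ∈ B i).card ≤ n) :
    ∑ i, (B i).card ≤ n * t.card := by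
  calc ∑ i, (B i).card = ∑ i, (t.bipartiteAbove (fun i b => b ∈ B i) i).card := by
        refine Finset.sum_congr rfl fun i _ => ?_
        rw [Finset.bipartiteAbove, Finset.filter_mem_eq_inter, Finset.inter_eq_right.mpr (hB i)]
    _ = ∑ b ∈ t, (Finset.univ.bipartiteBelow (fun i b => b ∈ B i) b).card :=
        Finset.sum_card_bipartiteAbove_eq_sum_card_bipartiteBelow _
    _ ≤ ∑ _b ∈ t, n := Finset.sum_le_sum h
    _ = n * t.card := by rw [Finset.sum_const, smul_eq_mul, mul_comm]

lemma IsPartition.exists_forall_mem_eq {β : Type*} {ℓ : ℕ} {P : Fin ℓ → Set V}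
    (hP : IsPartition P) (c : Fin ℓ → β) : ∃ ψ : V → β, ∀ i, ∀ v ∈ P i, ψ v = c i := by
  have hcover : ∀ v, ∃ i, v ∈ P i := fun v => Set.mem_iUnion.mp (hP.2 ▸ Set.mem_univ v)
  choose idx hidx using hcover
  refine ⟨c ∘ idx, fun i v hv => congrArg c ?_⟩
  by_contra hne
  exact Set.disjoint_left.mp (hP.1 _ _ hne) (hidx v) hv

lemma restrict_le (G : SimpleGraph V) (A : Set V) : restrict G A ≤ G := fun _ _ h => h.1

lemma mem_of_mem_edgeSet_restrict {G : SimpleGraph V} {A : Set V} {e : Sym2 V}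
    (he : e ∈ (restrict G A).edgeSet) {u : V} (hu : u ∈ e) : u ∈ A := by
  induction e using Sym2.ind with
  | _ a b =>
    rcases Sym2.mem_iff.mp hu with rfl | rfl
    exacts [he.2.1, he.2.2]

lemma bdry_restrict_inter_colour_subset {q : ℕ} (G : SimpleGraph V) (A : Set V) (ω : V → Fin q)
    (c : Fin q) :
    bdry (restrict G A) (A ∩ {v | ω v = c}) ⊆ {e ∈ G.edgeSet | ¬ Mono ω e} := by
  rintro e ⟨he, ⟨u, hue, -, rfl⟩, ⟨v, hve, hv⟩⟩
  exact ⟨SimpleGraph.edgeSet_mono (restrict_le G A) he,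
    fun hmono => hv ⟨mem_of_mem_edgeSet_restrict he hve, hmono v hve u hue⟩⟩

lemma card_filter_mem_bdry_restrict_inter_colour_le_two {q : ℕ} (G : SimpleGraph V)
    (A : Set V) (ω : V → Fin q) (e : Sym2 V) :
    (Finset.univ.filter fun c => e ∈ bdry (restrict G A) (A ∩ {v | ω v = c})).card ≤ 2 := by
  induction e using Sym2.ind with
  | _ a b =>
    refine (Finset.card_le_card fun c hc => ?_).trans (Finset.card_le_two (a := ω a) (b := ω b))
    obtain ⟨-, ⟨u, hu, -, rfl⟩, -⟩ := (Finset.mem_filter.mp hc).2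
    rcases Sym2.mem_iff.mp hu with rfl | rfl <;> simp

section Colouring

variable [Fintype V] {q : ℕ}

lemma sum_ncard_inter_colour {κ : Type*} [Fintype κ] (ω : V → κ) (A : Set V) :
    ∑ c, (A ∩ {v | ω v = c}).ncard = A.ncard := by
  simp only [Set.ncard_eq_toFinset_card', Set.toFinset_inter]
  rw [Finset.card_eq_sum_card_fiberwise (fun v _ => Finset.mem_univ (ω v))]
  simp only [Set.toFinset_ofPred, Finset.inter_filter, Finset.inter_univ]

lemma mG_add_ncard_not_mono (G : SimpleGraph V) (ω : V → Fin q) :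
    mG G ω + {e ∈ G.edgeSet | ¬ Mono ω e}.ncard = G.edgeSet.ncard :=
  Set.ncard_inter_add_ncard_sdiff_eq_ncard G.edgeSet {e | Mono ω e}

lemma sum_ncard_bdry_restrict_inter_colour_le (G : SimpleGraph V) (A : Set V) (ω : V → Fin q) :
    ∑ c, (bdry (restrict G A) (A ∩ {v | ω v = c})).ncard ≤
      2 * {e ∈ G.edgeSet | ¬ Mono ω e}.ncard := by
  simp only [Set.ncard_eq_toFinset_card']
  refine sum_card_le_mul_card_of_subset
    (fun c => Set.toFinset_subset_toFinset.mpr (bdry_restrict_inter_colour_subset G A ω c))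
    fun e _ => ?_
  simpa only [Set.mem_toFinset] using card_filter_mem_bdry_restrict_inter_colour_le_two G A ω e

lemma exists_part_forall_ncard_inter_colour_le_half {ℓ : ℕ} {P : Fin ℓ → Set V}
    (hP : IsPartition P) {ω : V → Fin q} (hω : ¬ ∃ ψ, GroundState P ψ ∧ CloseTo P ω ψ) :
    ∃ i, ∀ c, ((P i ∩ {v | ω v = c}).ncard : ℝ) ≤ (P i).ncard / 2 := by
  by_contra! hmaj
  choose c hc using hmaj
  obtain ⟨ψ, hψ⟩ := hP.exists_forall_mem_eq c
  refine hω ⟨ψ, fun i u hu v hv => (hψ i u hu).trans (hψ i v hv).symm, fun i => ?_⟩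
  refine (hc i).trans_le ?_
  have hsub : P i ∩ {v | ω v = c i} ⊆ P i ∩ {v | ω v = ψ v} := fun v hv =>
    ⟨hv.1, hv.2.trans (hψ i v hv.1).symm⟩
  exact_mod_cast Set.ncard_le_ncard hsub

lemma mul_ncard_le_two_mul_ncard_not_mono {ℓ : ℕ} {G : SimpleGraph V} {P : Fin ℓ → Set V}
    {α : ℝ} (hexp : PartExpansion G P α) {ω : V → Fin q} {i : Fin ℓ}
    (hi : ∀ c, ((P i ∩ {v | ω v = c}).ncard : ℝ) ≤ (P i).ncard / 2) :
    α * (P i).ncard ≤ 2 * {e ∈ G.edgeSet | ¬ Mono ω e}.ncard := by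
  calc α * (P i).ncard = ∑ c, α * (P i ∩ {v | ω v = c}).ncard := by
        rw [← Finset.mul_sum, ← sum_ncard_inter_colour ω (P i), Nat.cast_sum]
    _ ≤ ∑ c, ((bdry (restrict G (P i)) (P i ∩ {v | ω v = c})).ncard : ℝ) :=
        Finset.sum_le_sum fun c _ => hexp i _ Set.inter_subset_left (hi c)
    _ ≤ 2 * {e ∈ G.edgeSet | ¬ Mono ω e}.ncard := by
        exact_mod_cast sum_ncard_bdry_restrict_inter_colour_le G (P i) ω

lemma mG_le_of_not_close {ℓ : ℕ} {G : SimpleGraph V} {P : Fin ℓ → Set V} (hP : IsPartition P)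
    {α : ℝ} (hα : 0 ≤ α) (hexp : PartExpansion G P α) {η : ℝ}
    (hsize : ∀ i, η * (Fintype.card V : ℝ) ≤ ((P i).ncard : ℝ)) {ω : V → Fin q}
    (hω : ¬ ∃ ψ, GroundState P ψ ∧ CloseTo P ω ψ) :
    (mG G ω : ℝ) ≤ G.edgeSet.ncard - α * η * Fintype.card V / 2 := by
  obtain ⟨i, hi⟩ := exists_part_forall_ncard_inter_colour_le_half hP hω
  have hbichromatic := mul_ncard_le_two_mul_ncard_not_mono hexp hi
  have hsplit : (mG G ω : ℝ) + {e ∈ G.edgeSet | ¬ Mono ω e}.ncard = G.edgeSet.ncard := by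
    exact_mod_cast mG_add_ncard_not_mono G ω
  have hpart : α * (η * Fintype.card V) ≤ α * (P i).ncard :=
    mul_le_mul_of_nonneg_left (hsize i) hα
  linarith

end Colouring

theorem statement4_general [Fintype V] [DecidableEq V] (G : SimpleGraph V) {ℓ : ℕ}
    (P : Fin ℓ → Set V) (hP : IsPartition P) (q : ℕ)
    (α : ℝ) (hα : 0 < α) (hexp : PartExpansion G P α)
    (η : ℝ) (hsize : ∀ i, η * (Fintype.card V : ℝ) ≤ ((P i).ncard : ℝ))
    (β : ℝ) (hβ : 0 ≤ β) :
    Z G q β - Zstar G P q β ≤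
      (q : ℝ) ^ (Fintype.card V) *
        Real.exp (β * ((G.edgeSet.ncard : ℝ) - α * η * (Fintype.card V : ℝ) / 2)) := by
  set bound := Real.exp (β * ((G.edgeSet.ncard : ℝ) - α * η * (Fintype.card V : ℝ) / 2))
  have hterm : ∀ ω : V → Fin q, Real.exp (β * mG G ω) -
      (if ∃ ψ, GroundState P ψ ∧ CloseTo P ω ψ then Real.exp (β * mG G ω) else 0) ≤ bound := by
    intro ω
    split_ifs with hω
    · rw [sub_self]
      positivity
    · rw [sub_zero]
      exact Real.exp_le_exp.mpr <|
        mul_le_mul_of_nonneg_left (mG_le_of_not_close hP hα.le hexp hsize hω) hβ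
  calc Z G q β - Zstar G P q β
      = ∑ ω : V → Fin q, (Real.exp (β * mG G ω) -
          if ∃ ψ, GroundState P ψ ∧ CloseTo P ω ψ then Real.exp (β * mG G ω) else 0) := by
        rw [Z, Zstar, Finset.sum_sub_distrib]
    _ ≤ ∑ _ω : V → Fin q, bound := Finset.sum_le_sum fun ω _ => hterm ω
    _ = (q : ℝ) ^ Fintype.card V * bound := by simp

/-- Z − Z* ≤ qⁿ e^{β(|E| − αηn/2)}. -/
theorem statement4 [Fintype V] [DecidableEq V] (G : SimpleGraph V) {ℓ : ℕ}
    (P : Fin ℓ → Set V) (hP : IsPartition P) (q : ℕ) (hq : 2 ≤ q)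
    (α : ℝ) (hα : 0 < α) (hexp : PartExpansion G P α)
    (η : ℝ) (hη : 0 < η) (hsize : ∀ i, η * (Fintype.card V : ℝ) ≤ ((P i).ncard : ℝ))
    (β : ℝ) (hβ : 0 ≤ β) :
    Z G q β - Zstar G P q β ≤
      (q : ℝ) ^ (Fintype.card V) *
        Real.exp (β * ((G.edgeSet.ncard : ℝ) - α * η * (Fintype.card V : ℝ) / 2)) :=
  statement4_general G P hP q α hα hexp η hsize β hβ

end Paper

end
end

section
/- Let G=(V,E) be a finite simple graph, let B ⊆ P ⊆ V with vol_G(B) > 0, and let ℓ ≥ 1 be a real number such that e(P∖B, B) ≥ e(P∖B, V)/ℓ. Then φ_G(P) ≤ ℓ·φ_G(B). -/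
open Classical

noncomputable section

namespace Paper

variable {V : Type*}

/-!
Split the edges at stake into `a = e(B, V∖P)`, `b = e(B, P∖B)` and `c = e(P∖B, V∖P)`. Then
`|∂P| = a + c`, `|∂B| = a + b`, and the hypothesis reads `b + c ≤ ℓ b`, so
`|∂P| ≤ a + (ℓ - 1) b ≤ ℓ |∂B|`. Since `0 < vol B ≤ vol P`, dividing gives `φ(P) ≤ ℓ φ(B)`.
-/

def edgesBetween (G : SimpleGraph V) (X Y : Set V) : Set (Sym2 V) :=
  {e | e ∈ G.edgeSet ∧ ∃ u v, e = s(u, v) ∧ u ∈ X ∧ v ∈ Y}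

section EdgesBetween

variable (G : SimpleGraph V)

lemma eCount_eq_ncard_edgesBetween (S T : Set V) :
    eCount G S T = (edgesBetween G S (T \ S)).ncard := rfl

lemma edgesBetween_comm (X Y : Set V) : edgesBetween G X Y = edgesBetween G Y X := by
  ext e
  constructor <;> rintro ⟨hE, u, v, rfl, hu, hv⟩ <;> exact ⟨hE, v, u, Sym2.eq_swap, hv, hu⟩

lemma bdry_eq_edgesBetween (S : Set V) : bdry G S = edgesBetween G S Sᶜ := by
  ext e
  induction e using Sym2.inductionOn with
  | hf a b =>
    simp only [bdry, edgesBetween, Set.mem_ofPred_eq, Sym2.mem_iff]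
    constructor
    · rintro ⟨hE, ⟨u, (rfl | rfl), hu⟩, ⟨v, (rfl | rfl), hv⟩⟩
      · exact absurd hu hv
      · exact ⟨hE, u, v, rfl, hu, hv⟩
      · exact ⟨hE, u, v, Sym2.eq_swap, hu, hv⟩
      · exact absurd hu hv
    · rintro ⟨hE, u, v, huv, hu, hv⟩
      rcases Sym2.eq_iff.mp huv with ⟨rfl, rfl⟩ | ⟨rfl, rfl⟩
      · exact ⟨hE, ⟨a, Or.inl rfl, hu⟩, ⟨b, Or.inr rfl, hv⟩⟩
      · exact ⟨hE, ⟨b, Or.inr rfl, hu⟩, ⟨a, Or.inl rfl, hv⟩⟩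

lemma edgesBetween_union_right (X Y₁ Y₂ : Set V) :
    edgesBetween G X (Y₁ ∪ Y₂) = edgesBetween G X Y₁ ∪ edgesBetween G X Y₂ := by
  ext e
  constructor
  · rintro ⟨hE, u, v, rfl, hu, hv | hv⟩
    · exact Or.inl ⟨hE, u, v, rfl, hu, hv⟩
    · exact Or.inr ⟨hE, u, v, rfl, hu, hv⟩
  · rintro (⟨hE, u, v, rfl, hu, hv⟩ | ⟨hE, u, v, rfl, hu, hv⟩)
    · exact ⟨hE, u, v, rfl, hu, Or.inl hv⟩
    · exact ⟨hE, u, v, rfl, hu, Or.inr hv⟩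

lemma disjoint_edgesBetween_right {X Y₁ Y₂ : Set V} (hX : Disjoint X Y₂) (hY : Disjoint Y₁ Y₂) :
    Disjoint (edgesBetween G X Y₁) (edgesBetween G X Y₂) := by
  rw [Set.disjoint_left]
  rintro e ⟨-, u, v, rfl, hu, hv⟩ ⟨-, u', v', huv, -, hv'⟩
  rcases Sym2.eq_iff.mp huv with ⟨rfl, rfl⟩ | ⟨rfl, rfl⟩
  · exact Set.disjoint_left.mp hY hv hv'
  · exact Set.disjoint_left.mp hX hu hv'

variable [Finite V]

lemma ncard_edgesBetween_union_right {X Y₁ Y₂ : Set V} (hX : Disjoint X Y₂)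
    (hY : Disjoint Y₁ Y₂) :
    (edgesBetween G X (Y₁ ∪ Y₂)).ncard =
      (edgesBetween G X Y₁).ncard + (edgesBetween G X Y₂).ncard := by
  rw [edgesBetween_union_right, Set.ncard_union_eq (disjoint_edgesBetween_right G hX hY)]

lemma ncard_edgesBetween_union_left {X₁ X₂ Y : Set V} (hY : Disjoint Y X₂)
    (hX : Disjoint X₁ X₂) :
    (edgesBetween G (X₁ ∪ X₂) Y).ncard =
      (edgesBetween G X₁ Y).ncard + (edgesBetween G X₂ Y).ncard := by
  rw [edgesBetween_comm, ncard_edgesBetween_union_right G hY hX, edgesBetween_comm G Y,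
    edgesBetween_comm G Y]

end EdgesBetween

section Split

variable (G : SimpleGraph V) {B P : Set V}

lemma eCount_sdiff_left_self : eCount G (P \ B) B = (edgesBetween G B (P \ B)).ncard := by
  rw [eCount_eq_ncard_edgesBetween, Set.disjoint_sdiff_right.sdiff_eq_left, edgesBetween_comm]

variable [Finite V]

lemma eCount_sdiff_left_univ (hBP : B ⊆ P) :
    eCount G (P \ B) Set.univ =
      (edgesBetween G B (P \ B)).ncard + (edgesBetween G (P \ B) Pᶜ).ncard := by
  have hcompl : Set.univ \ (P \ B) = B ∪ Pᶜ := by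
    ext x; by_cases hB : x ∈ B <;> by_cases hP : x ∈ P <;> simp [hB, hP]
  rw [eCount_eq_ncard_edgesBetween, hcompl,
    ncard_edgesBetween_union_right G (disjoint_compl_right.mono_left Set.sdiff_subset)
      (disjoint_compl_right.mono_left hBP), edgesBetween_comm G (P \ B) B]

lemma ncard_bdry_eq_of_subset (hBP : B ⊆ P) :
    (bdry G P).ncard = (edgesBetween G B Pᶜ).ncard + (edgesBetween G (P \ B) Pᶜ).ncard := by
  rw [bdry_eq_edgesBetween]
  nth_rw 1 [← Set.union_sdiff_cancel hBP]
  exact ncard_edgesBetween_union_left G (disjoint_compl_left.mono_right Set.sdiff_subset)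
    Set.disjoint_sdiff_right

lemma ncard_bdry_eq_of_superset (hBP : B ⊆ P) :
    (bdry G B).ncard = (edgesBetween G B (P \ B)).ncard + (edgesBetween G B Pᶜ).ncard := by
  have hcompl : Bᶜ = (P \ B) ∪ Pᶜ := by
    ext x; have := @hBP x; simp only [Set.mem_compl_iff, Set.mem_union, Set.mem_sdiff]; tauto
  rw [bdry_eq_edgesBetween, hcompl, ncard_edgesBetween_union_right G
    (disjoint_compl_right.mono_left hBP) (disjoint_compl_right.mono_left Set.sdiff_subset)]

end Split

lemma vol_mono [Finite V] (G : SimpleGraph V) {S T : Set V} (h : S ⊆ T) : vol G S ≤ vol G T := by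
  rw [← Set.union_sdiff_cancel h, vol, vol,
    finsum_mem_union Set.disjoint_sdiff_right (Set.toFinite _) (Set.toFinite _)]
  exact Nat.le_add_right _ _

/-- if e(P∖B, B) ≥ e(P∖B, V)/ℓ then φ(P) ≤ ℓ·φ(B). -/
theorem statement14 [Fintype V] (G : SimpleGraph V) (B P : Set V) (hBP : B ⊆ P)
    (hvol : 0 < vol G B) (ℓ : ℝ) (hℓ : 1 ≤ ℓ)
    (he : (eCount G (P \ B) Set.univ : ℝ) / ℓ ≤ (eCount G (P \ B) B : ℝ)) :
    cond G P ≤ ℓ * cond G B := by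
  have hℓ0 : 0 < ℓ := one_pos.trans_le hℓ
  rw [eCount_sdiff_left_univ G hBP, eCount_sdiff_left_self, div_le_iff₀ hℓ0] at he
  have hbdry : ((bdry G P).ncard : ℝ) ≤ ℓ * (bdry G B).ncard := by
    rw [ncard_bdry_eq_of_subset G hBP, ncard_bdry_eq_of_superset G hBP]
    have ha : ((edgesBetween G B Pᶜ).ncard : ℝ) ≤ ℓ * (edgesBetween G B Pᶜ).ncard :=
      le_mul_of_one_le_left (Nat.cast_nonneg _) hℓ
    push_cast at he ⊢
    linarith
  have hvolBP : (vol G B : ℝ) ≤ vol G P := by exact_mod_cast vol_mono G hBP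
  rw [cond, cond, ← mul_div_assoc]
  exact div_le_div₀ (by positivity) hbdry (by exact_mod_cast hvol) hvolBP

end Paper

end
end
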